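/- arXiv:2009.14347 — 5 statements merged into one kernel-verified Lean document; each statement's English description precedes it below -/
import Mathlib

section
/- Let ζ(x) = 2x − sin(2x), ψ(x) = sin(x)/(1 + ζ(x)²), and V(x) = −32·sin(x)·(ζ(x)³·cos(x) − 3·ζ(x)²·sin(x)³ + ζ(x)·cos(x) + sin(x)³)/(1 + ζ(x)²)². Then for every x ∈ ℝ one has −ψ''(x) + V(x)·ψ(x) = ψ(x); that is, ψ is a solution of the one-dimensional Schrödinger eigenvalue equation with the von Neumann–Wigner potential V and eigenvalue 1. -/
/-!
Writing ψ = sin / w with w = 1 + ζ², the key observation is ζ' = 2 − 2 cos 2x = 4 sin² x, so that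
w' = 8 ζ sin² x and w'' = 32 sin⁴ x + 16 ζ sin x cos x are polynomials in ζ, sin x, cos x. The
quotient rule applied twice then turns −ψ'' + Vψ − ψ, multiplied by w³, into a polynomial
expression in ζ, sin x, cos x that vanishes identically.
-/

open Real

/-- ζ(x) = 2x − sin(2x) -/
noncomputable def zeta (x : ℝ) : ℝ := 2 * x - Real.sin (2 * x)

/-- ψ(x) = sin(x)/(1 + ζ(x)²) -/
noncomputable def psi (x : ℝ) : ℝ := Real.sin x / (1 + zeta x ^ 2)

/-- One-dimensional von Neumann–Wigner potential. -/
noncomputable def V (x : ℝ) : ℝ :=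
  -32 * Real.sin x *
    (zeta x ^ 3 * Real.cos x - 3 * zeta x ^ 2 * Real.sin x ^ 3
      + zeta x * Real.cos x + Real.sin x ^ 3) / (1 + zeta x ^ 2) ^ 2

theorem deriv_deriv_div {u u' u'' w w' w'' : ℝ → ℝ}
    (hu : ∀ x, HasDerivAt u (u' x) x) (hu' : ∀ x, HasDerivAt u' (u'' x) x)
    (hw : ∀ x, HasDerivAt w (w' x) x) (hw' : ∀ x, HasDerivAt w' (w'' x) x)
    (hw0 : ∀ x, w x ≠ 0) (x : ℝ) :
    deriv (deriv fun y => u y / w y) x =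
      (u'' x * w x ^ 2 - 2 * u' x * w' x * w x - u x * w'' x * w x + 2 * u x * w' x ^ 2)
        / w x ^ 3 := by
  have deriv_div : deriv (fun y => u y / w y) = fun y => (u' y * w y - u y * w' y) / w y ^ 2 :=
    funext fun y => ((hu y).fun_div (hw y) (hw0 y)).deriv
  have hnum := ((hu' x).fun_mul (hw x)).fun_sub ((hu x).fun_mul (hw' x))
  have hden : HasDerivAt (fun y => w y ^ 2) (2 * w x * w' x) x :=
    ((hw x).fun_pow 2).congr_deriv (by ring)
  rw [deriv_div, (hnum.fun_div hden (pow_ne_zero 2 (hw0 x))).deriv]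
  have hwx := hw0 x
  field_simp
  ring

theorem hasDerivAt_zeta (x : ℝ) : HasDerivAt zeta (4 * sin x ^ 2) x := by
  have h2x : HasDerivAt (fun y : ℝ => 2 * y) 2 x := by simpa using (hasDerivAt_id x).const_mul 2
  refine (h2x.fun_sub ((hasDerivAt_sin (2 * x)).comp x h2x)).congr_deriv ?_
  rw [cos_two_mul_eq_one_sub]
  ring

theorem hasDerivAt_one_add_zeta_sq (x : ℝ) :
    HasDerivAt (fun y => 1 + zeta y ^ 2) (8 * zeta x * sin x ^ 2) x :=
  (((hasDerivAt_zeta x).fun_pow 2).const_add 1).congr_deriv (by ring)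

theorem hasDerivAt_eight_mul_zeta_mul_sin_sq (x : ℝ) :
    HasDerivAt (fun y => 8 * zeta y * sin y ^ 2)
      (32 * sin x ^ 4 + 16 * zeta x * sin x * cos x) x :=
  (((hasDerivAt_zeta x).const_mul 8).fun_mul ((hasDerivAt_sin x).fun_pow 2)).congr_deriv
    (by ring)

/-- ψ solves −ψ'' + V·ψ = ψ on all of ℝ. -/
theorem vonNeumannWigner_eigenfunction :
    ∀ x : ℝ, -(deriv (deriv psi)) x + V x * psi x = psi x := by
  intro x
  have hw0 (y : ℝ) : (1 : ℝ) + zeta y ^ 2 ≠ 0 := by positivity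
  have hpsi'' := deriv_deriv_div hasDerivAt_sin hasDerivAt_cos hasDerivAt_one_add_zeta_sq
    hasDerivAt_eight_mul_zeta_mul_sin_sq hw0 x
  change -(deriv (deriv fun y => sin y / (1 + zeta y ^ 2))) x + V x * psi x = psi x
  rw [hpsi'', V, psi]
  have hwx := hw0 x
  field_simp
  ring
end

section
/- Let ζ(x) = 2x − sin(2x) and V(x) = −32·sin(x)·(ζ(x)³·cos(x) − 3·ζ(x)²·sin(x)³ + ζ(x)·cos(x) + sin(x)³)/(1 + ζ(x)²)². Then V is a bounded function on ℝ: there exists a constant C such that |V(x)| ≤ C for all x ∈ ℝ. -/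
open Real

/-- The von Neumann–Wigner potential V is bounded on ℝ. -/
theorem V_bounded : ∃ C : ℝ, ∀ x : ℝ, |V x| ≤ C := by
  refine ⟨192, fun x => ?_⟩
  have hs1 : |Real.sin x| ≤ 1 := Real.abs_sin_le_one x
  have hc1 : |Real.cos x| ≤ 1 := Real.abs_cos_le_one x
  set t := zeta x with ht
  set s := Real.sin x with hsx
  set c := Real.cos x with hcx
  have hd : (0:ℝ) < (1 + t ^ 2) ^ 2 := by positivity
  rw [V, abs_div, abs_of_pos hd, div_le_iff₀ hd]
  have h1 : |(-32 : ℝ) * s * (t ^ 3 * c - 3 * t ^ 2 * s ^ 3 + t * c + s ^ 3)|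
      ≤ 32 * |t ^ 3 * c - 3 * t ^ 2 * s ^ 3 + t * c + s ^ 3| := by
    rw [abs_mul, abs_mul]
    have : |(-32 : ℝ)| = 32 := by norm_num
    rw [this]
    nlinarith [abs_nonneg (t ^ 3 * c - 3 * t ^ 2 * s ^ 3 + t * c + s ^ 3), abs_nonneg s]
  have hN : |t ^ 3 * c - 3 * t ^ 2 * s ^ 3 + t * c + s ^ 3|
      ≤ |t| ^ 3 + 3 * t ^ 2 + |t| + 1 := by
    have e1 : |t ^ 3 * c| ≤ |t| ^ 3 := by
      rw [abs_mul, abs_pow]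
      nlinarith [abs_nonneg (t ^ 3), abs_nonneg c, pow_abs t 3, abs_nonneg t,
        pow_nonneg (abs_nonneg t) 3]
    have e2 : |3 * t ^ 2 * s ^ 3| ≤ 3 * t ^ 2 := by
      rw [abs_mul, abs_mul]
      have hs3 : |s ^ 3| ≤ 1 := by
        rw [abs_pow]; exact pow_le_one₀ (abs_nonneg s) hs1
      have : |(3:ℝ)| * |t ^ 2| = 3 * t ^ 2 := by
        rw [abs_of_nonneg (by positivity : (0:ℝ) ≤ t ^ 2)]; norm_num
      nlinarith [abs_nonneg (t ^ 2), sq_nonneg t, abs_sq t]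
    have e3 : |t * c| ≤ |t| := by
      rw [abs_mul]
      nlinarith [abs_nonneg t, abs_nonneg c]
    have e4 : |s ^ 3| ≤ 1 := by
      rw [abs_pow]; exact pow_le_one₀ (abs_nonneg s) hs1
    calc |t ^ 3 * c - 3 * t ^ 2 * s ^ 3 + t * c + s ^ 3|
        ≤ |t ^ 3 * c - 3 * t ^ 2 * s ^ 3 + t * c| + |s ^ 3| := abs_add_le _ _
      _ ≤ (|t ^ 3 * c - 3 * t ^ 2 * s ^ 3| + |t * c|) + |s ^ 3| := by
          gcongr; exact abs_add_le _ _
      _ ≤ ((|t ^ 3 * c| + |3 * t ^ 2 * s ^ 3|) + |t * c|) + |s ^ 3| := by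
          gcongr; exact abs_sub _ _
      _ ≤ |t| ^ 3 + 3 * t ^ 2 + |t| + 1 := by linarith
  have hpoly : |t| ^ 3 + 3 * t ^ 2 + |t| + 1 ≤ 6 * (1 + t ^ 2) ^ 2 := by
    have ha : (0:ℝ) ≤ |t| := abs_nonneg t
    have h2 : |t| ^ 2 = t ^ 2 := sq_abs t
    nlinarith [sq_nonneg (|t| - 1), sq_nonneg (|t| ^ 2 - 1), sq_nonneg (|t| ^ 2 - |t|)]
  nlinarith [hd]
end

section
/- Let ζ(x) = 2x − sin(2x) and V(x) = −32·sin(x)·(ζ(x)³·cos(x) − 3·ζ(x)²·sin(x)³ + ζ(x)·cos(x) + sin(x)³)/(1 + ζ(x)²)². Then V(x) → 0 as |x| → ∞; that is, V tends to 0 along the cocompact filter on ℝ. -/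
open Real Filter

lemma abs_zeta_ge (x : ℝ) : 2 * |x| - 1 ≤ |zeta x| := by
  have h := abs_sub_abs_le_abs_sub (2 * x) (Real.sin (2 * x))
  have hs : |Real.sin (2 * x)| ≤ 1 := Real.abs_sin_le_one (2 * x)
  have h2 : |2 * x| = 2 * |x| := by rw [abs_mul]; norm_num
  rw [zeta]
  linarith [h2 ▸ h]

lemma abs_zeta_tendsto : Tendsto (fun x => |zeta x|) (cocompact ℝ) atTop := by
  have h : Tendsto (fun x : ℝ => |x|) (cocompact ℝ) atTop := by
    have h0 : Tendsto (fun x : ℝ => ‖x‖) (cocompact ℝ) atTop := tendsto_norm_cocompact_atTop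
    simpa [Real.norm_eq_abs] using h0
  have hx : Tendsto (fun x : ℝ => 2 * |x| - 1) (cocompact ℝ) atTop := by
    have h2 := tendsto_atTop_add_const_right (cocompact ℝ) (-1) (h.const_mul_atTop two_pos)
    exact h2.congr (fun x => by ring)
  exact tendsto_atTop_mono abs_zeta_ge hx

/-- V(x) → 0 as |x| → ∞ (along the cocompact filter on ℝ). -/
theorem V_tendsto_zero_cocompact :
    Filter.Tendsto V (Filter.cocompact ℝ) (nhds 0) := by
  have hb : ∀ᶠ x in cocompact ℝ, ‖V x‖ ≤ 192 / |zeta x| := by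
    filter_upwards [abs_zeta_tendsto.eventually_ge_atTop 1] with x hx
    set u := zeta x with hu
    set s := Real.sin x
    set c := Real.cos x
    have hs1 : |s| ≤ 1 := Real.abs_sin_le_one x
    have hc1 : |c| ≤ 1 := Real.abs_cos_le_one x
    have hupos : (0 : ℝ) < |u| := lt_of_lt_of_le one_pos hx
    have hdpos : (0 : ℝ) < (1 + u ^ 2) ^ 2 := by positivity
    have hVx : V x = -32 * s * (u ^ 3 * c - 3 * u ^ 2 * s ^ 3 + u * c + s ^ 3) /
        (1 + u ^ 2) ^ 2 := rfl
    rw [Real.norm_eq_abs, hVx, abs_div, abs_of_pos hdpos, div_le_div_iff₀ hdpos hupos]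
    have hnum : |(-32 : ℝ) * s * (u ^ 3 * c - 3 * u ^ 2 * s ^ 3 + u * c + s ^ 3)| ≤
        32 * (|u| ^ 3 + 3 * |u| ^ 2 + |u| + 1) := by
      rw [abs_mul, abs_mul]
      have h1 : |u ^ 3 * c - 3 * u ^ 2 * s ^ 3 + u * c + s ^ 3| ≤
          |u| ^ 3 + 3 * |u| ^ 2 + |u| + 1 := by
        have e1 : |u ^ 3 * c| ≤ |u| ^ 3 := by
          rw [abs_mul, abs_pow]
          nlinarith [abs_nonneg u, pow_nonneg (abs_nonneg u) 3, abs_nonneg c]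
        have e2 : |3 * u ^ 2 * s ^ 3| ≤ 3 * |u| ^ 2 := by
          rw [abs_mul, abs_mul, abs_pow, abs_pow, show |(3:ℝ)| = 3 by norm_num]
          have : |s| ^ 3 ≤ 1 := pow_le_one₀ (abs_nonneg s) hs1
          nlinarith [pow_nonneg (abs_nonneg u) 2, pow_nonneg (abs_nonneg s) 3]
        have e3 : |u * c| ≤ |u| := by
          rw [abs_mul]
          nlinarith [abs_nonneg u, abs_nonneg c]
        have e4 : |s ^ 3| ≤ 1 := by
          rw [abs_pow]; exact pow_le_one₀ (abs_nonneg s) hs1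
        calc |u ^ 3 * c - 3 * u ^ 2 * s ^ 3 + u * c + s ^ 3|
            ≤ |u ^ 3 * c - 3 * u ^ 2 * s ^ 3 + u * c| + |s ^ 3| := abs_add_le _ _
          _ ≤ |u ^ 3 * c - 3 * u ^ 2 * s ^ 3| + |u * c| + |s ^ 3| := by
              linarith [abs_add_le (u ^ 3 * c - 3 * u ^ 2 * s ^ 3) (u * c)]
          _ ≤ |u ^ 3 * c| + |3 * u ^ 2 * s ^ 3| + |u * c| + |s ^ 3| := by
              linarith [abs_sub (u ^ 3 * c) (3 * u ^ 2 * s ^ 3)]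
          _ ≤ |u| ^ 3 + 3 * |u| ^ 2 + |u| + 1 := by linarith
      have h32 : |(-32 : ℝ)| = 32 := by norm_num
      rw [h32]
      nlinarith [abs_nonneg (u ^ 3 * c - 3 * u ^ 2 * s ^ 3 + u * c + s ^ 3),
        mul_le_mul_of_nonneg_left h1 (abs_nonneg s), abs_nonneg s]
    have husq : |u| ^ 2 = u ^ 2 := sq_abs u
    calc |(-32 : ℝ) * s * (u ^ 3 * c - 3 * u ^ 2 * s ^ 3 + u * c + s ^ 3)| * |u|
        ≤ 32 * (|u| ^ 3 + 3 * |u| ^ 2 + |u| + 1) * |u| :=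
          mul_le_mul_of_nonneg_right hnum (abs_nonneg u)
      _ ≤ 192 * (1 + u ^ 2) ^ 2 := by nlinarith [hx, sq_nonneg (|u| - 1), sq_nonneg (|u| ^ 2 - |u|)]
  exact squeeze_zero_norm' hb (tendsto_const_nhds.div_atTop abs_zeta_tendsto)
end

section
/- Let ζ(x) = 2x − sin(2x) and V(x) = −32·sin(x)·(ζ(x)³·cos(x) − 3·ζ(x)²·sin(x)³ + ζ(x)·cos(x) + sin(x)³)/(1 + ζ(x)²)². Then the leading term of V for large x is −8·sin(2x)/x, in the sense that x·V(x) + 8·sin(2x) → 0 as x → +∞. -/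
set_option maxHeartbeats 1000000


open Real Filter

lemma V_key (x : ℝ) (hx : 1 ≤ x) :
    |x * V x + 8 * Real.sin (2 * x)| ≤ 128 / x := by
  have hx0 : (0:ℝ) < x := by linarith
  have hs2 : Real.sin (2 * x) ≤ 1 := Real.sin_le_one _
  have hs2' : -1 ≤ Real.sin (2 * x) := Real.neg_one_le_sin _
  set s := Real.sin x with hs
  set c := Real.cos x with hc
  have hsc : s ^ 2 + c ^ 2 = 1 := Real.sin_sq_add_cos_sq x
  set z := zeta x with hz
  have hzx : x ≤ z := by
    rw [hz, zeta]; linarith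
  have hz1 : (1:ℝ) ≤ z := le_trans hx hzx
  have hD : (0:ℝ) < 1 + z ^ 2 := by positivity
  have ht2 : Real.sin (2 * x) = 2 * s * c := Real.sin_two_mul x
  have hzz : z = 2 * x - 2 * s * c := by rw [hz, zeta, ht2]
  have hid : x * V x + 8 * Real.sin (2 * x) =
      (8 * (2 * s * c) * (1 + z ^ 2) - 8 * (2 * s * c) ^ 2 * z * (1 + z ^ 2)
        + 32 * x * s ^ 4 * (3 * z ^ 2 - 1)) / (1 + z ^ 2) ^ 2 := by
    rw [V, ht2, ← hz, ← hs, ← hc, hzz]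
    have hD' : (0:ℝ) < 1 + (2 * x - 2 * s * c) ^ 2 := by positivity
    field_simp
    ring
  set t : ℝ := 2 * s * c with htdef
  have ht : t = Real.sin (2 * x) := ht2.symm
  have ht1 : t ≤ 1 := by rw [ht]; exact hs2
  have ht1' : -1 ≤ t := by rw [ht]; exact hs2'
  have htsq : t ^ 2 ≤ 1 := by nlinarith
  have hs4 : s ^ 4 ≤ 1 := by nlinarith [sq_nonneg s, sq_nonneg c, sq_nonneg (s^2)]
  have hs4' : 0 ≤ s ^ 4 := by positivity
  have h3z : (0:ℝ) ≤ 3 * z ^ 2 - 1 := by nlinarith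
  set N : ℝ := 8 * t * (1 + z ^ 2) - 8 * t ^ 2 * z * (1 + z ^ 2)
        + 32 * x * s ^ 4 * (3 * z ^ 2 - 1) with hN
  have hupper : N ≤ 8 * (1 + z ^ 2) * (1 + z) + 96 * x * z ^ 2 := by
    have hA : 8 * t * (1 + z ^ 2) ≤ 8 * (1 + z ^ 2) := by nlinarith
    have hB : -(8 * t ^ 2 * z * (1 + z ^ 2)) ≤ 0 := by
      have : 0 ≤ 8 * t ^ 2 * z * (1 + z ^ 2) := by positivity
      linarith
    have hC : 32 * x * s ^ 4 * (3 * z ^ 2 - 1) ≤ 96 * x * z ^ 2 := by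
      nlinarith [mul_nonneg hx0.le h3z, mul_nonneg (mul_nonneg hx0.le hs4') h3z]
    rw [hN]; nlinarith
  have hlower : -(8 * (1 + z ^ 2) * (1 + z) + 96 * x * z ^ 2) ≤ N := by
    have hA : -(8 * (1 + z ^ 2)) ≤ 8 * t * (1 + z ^ 2) := by nlinarith
    have hB : -(8 * z * (1 + z ^ 2)) ≤ -(8 * t ^ 2 * z * (1 + z ^ 2)) := by
      have h0 : 0 ≤ (1 - t ^ 2) * (8 * z * (1 + z ^ 2)) :=
        mul_nonneg (by linarith) (by positivity)
      nlinarith [h0]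
    have hC : 0 ≤ 32 * x * s ^ 4 * (3 * z ^ 2 - 1) := by positivity
    rw [hN]; nlinarith [mul_nonneg (mul_nonneg hx0.le (sq_nonneg z)) hx0.le]
  have habsN : |N| ≤ 8 * (1 + z ^ 2) * (1 + z) + 96 * x * z ^ 2 :=
    abs_le.mpr ⟨hlower, hupper⟩
  rw [hid, abs_div, abs_of_pos (by positivity : (0:ℝ) < (1 + z ^ 2) ^ 2),
    div_le_div_iff₀ (by positivity) hx0]
  have hfin : (8 * (1 + z ^ 2) * (1 + z) + 96 * x * z ^ 2) * x ≤ 128 * (1 + z ^ 2) ^ 2 := by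
    nlinarith [sq_nonneg z, sq_nonneg (z ^ 2 - 1), mul_le_mul_of_nonneg_left hzx (by positivity : (0:ℝ) ≤ 8 * (1 + z ^ 2)), mul_le_mul_of_nonneg_left hzx (by positivity : (0:ℝ) ≤ 96 * z ^ 2), mul_le_mul_of_nonneg_left (mul_le_mul hzx hzx hx0.le (by linarith)) (by norm_num : (0:ℝ) ≤ 96)]
  calc |N| * x ≤ (8 * (1 + z ^ 2) * (1 + z) + 96 * x * z ^ 2) * x :=
        mul_le_mul_of_nonneg_right habsN hx0.le
    _ ≤ 128 * (1 + z ^ 2) ^ 2 := hfin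

/-- The leading term of V for large x is −8·sin(2x)/x, in the sense that
x·V(x) + 8·sin(2x) → 0 as x → +∞. -/
theorem V_leading_term :
    Filter.Tendsto (fun x : ℝ => x * V x + 8 * Real.sin (2 * x))
      Filter.atTop (nhds 0) := by
  have hg : Filter.Tendsto (fun x : ℝ => 128 / x) Filter.atTop (nhds 0) :=
    Filter.Tendsto.div_atTop tendsto_const_nhds tendsto_id
  refine squeeze_zero_norm' ?_ hg
  filter_upwards [eventually_ge_atTop (1:ℝ)] with x hx
  simpa [Real.norm_eq_abs] using V_key x hx
end

section
/- Let ζ(x) = 2x − sin(2x) and V(x) = −32·sin(x)·(ζ(x)³·cos(x) − 3·ζ(x)²·sin(x)³ + ζ(x)·cos(x) + sin(x)³)/(1 + ζ(x)²)². Then for every m ≥ 0 and every real E with E² > 16 + m², the equation −u''(x) + (m² + V(x))·u(x) = E²·u(x) for all x ∈ ℝ has no nonzero twice continuously differentiable square-integrable solution u : ℝ → ℝ. In other words, even for the von Neumann–Wigner scalar potential, the Klein–Gordon operator has no eigenvalues E with |E| > √(16 + m²). -/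
open Real MeasureTheory

/-!
Write `L = E² - m² > 16`, so that `u'' = (V - L) u`. The potential has the Wigner–von Neumann
form `V x = -2 g x * sin (2 x) + D x` with a non-integrable amplitude `g x ~ 4 / x`, while `g'`,
`g²` and `D` are `O(x⁻²)`. Hence the energy `u'² + L u²` has a non-integrable derivative, but a
correction of size `g / (L - 1)`, available away from the resonance `L = 1`, yields a comparable
modified energy whose logarithmic derivative is `O(x⁻²)`. By Gronwall, the energy of a nonzero
solution stays bounded and bounded away from zero on `[1, ∞)`. Integrating
`(u u')' = u'² + (V - L) u²` then bounds `∫₁ˣ (u² + u'²)` uniformly in `x` in terms of `∫ u²`,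
contradicting its linear growth.
-/

open Set

theorem mul_exp_neg_le_and_le_mul_exp_of_abs_deriv_le {f k K : ℝ → ℝ} {a x : ℝ}
    (hf : ∀ t ∈ Ici a, DifferentiableAt ℝ f t) (hK : ∀ t ∈ Ici a, HasDerivAt K (k t) t)
    (hbound : ∀ t ∈ Ici a, |deriv f t| ≤ k t * f t) (hx : a ≤ x) :
    f a * exp (-(K x - K a)) ≤ f x ∧ f x ≤ f a * exp (K x - K a) := by
  have hup : ∀ t ∈ Ici a, HasDerivAt (fun s => f s * exp (K s))
      ((deriv f t + k t * f t) * exp (K t)) t := fun t ht =>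
    ((hf t ht).hasDerivAt.mul (hK t ht).exp).congr_deriv (by ring)
  have hdown : ∀ t ∈ Ici a, HasDerivAt (fun s => f s * exp (-K s))
      ((deriv f t - k t * f t) * exp (-K t)) t := fun t ht =>
    ((hf t ht).hasDerivAt.mul (hK t ht).neg.exp).congr_deriv (by simp only [Pi.neg_apply]; ring)
  have hmono : MonotoneOn (fun s => f s * exp (K s)) (Ici a) := by
    refine monotoneOn_of_deriv_nonneg (convex_Ici a)
      (fun t ht => (hup t ht).continuousAt.continuousWithinAt)
      (fun t ht => (hup t (interior_subset ht)).differentiableAt.differentiableWithinAt)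
      fun t ht => ?_
    replace ht : t ∈ Ici a := interior_subset ht
    rw [(hup t ht).deriv]
    have := neg_abs_le (deriv f t)
    exact mul_nonneg (by linarith [hbound t ht]) (exp_pos _).le
  have hanti : AntitoneOn (fun s => f s * exp (-K s)) (Ici a) := by
    refine antitoneOn_of_deriv_nonpos (convex_Ici a)
      (fun t ht => (hdown t ht).continuousAt.continuousWithinAt)
      (fun t ht => (hdown t (interior_subset ht)).differentiableAt.differentiableWithinAt)
      fun t ht => ?_
    replace ht : t ∈ Ici a := interior_subset ht
    rw [(hdown t ht).deriv]
    have := le_abs_self (deriv f t)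
    exact mul_nonpos_of_nonpos_of_nonneg (by linarith [hbound t ht]) (exp_pos _).le
  have h1 := hmono self_mem_Ici hx hx
  have h2 := hanti self_mem_Ici hx hx
  simp only at h1 h2
  constructor
  · calc f a * exp (-(K x - K a)) = f a * exp (K a) * exp (-K x) := by
          rw [mul_assoc, ← exp_add]; ring_nf
      _ ≤ f x * exp (K x) * exp (-K x) := by gcongr
      _ = f x := by rw [mul_assoc, ← exp_add]; simp
  · calc f x = f x * exp (-K x) * exp (K x) := by rw [mul_assoc, ← exp_add]; simp
      _ ≤ f a * exp (-K a) * exp (K x) := by gcongr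
      _ = f a * exp (K x - K a) := by rw [mul_assoc, ← exp_add]; ring_nf

theorem eq_zero_of_hasDerivAt_of_eq_zero {u q W : ℝ → ℝ} {C t₀ : ℝ}
    (hu : ∀ t, HasDerivAt u (q t) t) (hq : ∀ t, HasDerivAt q (W t * u t) t)
    (hW : ∀ t, |W t| ≤ C) (hu₀ : u t₀ = 0) (hq₀ : q t₀ = 0) : u = 0 := by
  have hlip : ∀ t, LipschitzWith (C.toNNReal + 1) fun p : ℝ × ℝ => (p.2, W t * p.1) := by
    intro t
    refine LipschitzWith.of_dist_le_mul fun p p' => ?_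
    simp only [Prod.dist_eq, Real.dist_eq, NNReal.coe_add, NNReal.coe_one]
    have h1 : |W t * p.1 - W t * p'.1| ≤ C.toNNReal * |p.1 - p'.1| := by
      rw [← mul_sub, abs_mul]
      exact mul_le_mul_of_nonneg_right ((hW t).trans (Real.le_coe_toNNReal C)) (abs_nonneg _)
    have := le_max_left |p.1 - p'.1| |p.2 - p'.2|
    have := le_max_right |p.1 - p'.1| |p.2 - p'.2|
    have := abs_nonneg (p.1 - p'.1)
    refine max_le ?_ ?_ <;> nlinarith [C.toNNReal.coe_nonneg]
  have h := ODE_solution_unique_univ (s := fun _ => univ) (t₀ := t₀)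
    (f := fun t => (u t, q t)) (g := fun _ => (0, 0))
    (fun t => (hlip t).lipschitzOnWith) (fun t => ⟨(hu t).prodMk (hq t), trivial⟩)
    (fun t => ⟨(hasDerivAt_const t _).congr_deriv (by ext <;> simp), trivial⟩)
    (by simp [hu₀, hq₀])
  funext t
  exact congrArg Prod.fst (congrFun h t)

theorem not_integrable_sq_of_energy_bounds {u q W : ℝ → ℝ} {C a δ Δ : ℝ}
    (hu : ∀ t, HasDerivAt u (q t) t) (hq : ∀ t, HasDerivAt q (W t * u t) t)
    (hWc : Continuous W) (hW : ∀ t, |W t| ≤ C) (hδ : 0 < δ)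
    (hlow : ∀ t, a ≤ t → δ ≤ u t ^ 2 + q t ^ 2) (hup : ∀ t, a ≤ t → u t ^ 2 + q t ^ 2 ≤ Δ) :
    ¬ Integrable (fun t => u t ^ 2) := by
  intro hint
  have hcu : Continuous u := continuous_iff_continuousAt.2 fun t => (hu t).continuousAt
  have hcq : Continuous q := continuous_iff_continuousAt.2 fun t => (hq t).continuousAt
  set I := ∫ t, u t ^ 2
  have hI : 0 ≤ I := integral_nonneg fun t => sq_nonneg _
  have hC : 0 ≤ C := (abs_nonneg _).trans (hW 0)
  have hΔ : 0 ≤ Δ := hδ.le.trans ((hlow a le_rfl).trans (hup a le_rfl))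
  set X := a + (Δ + (1 + C) * I + 1) / δ
  have haX : a ≤ X := le_add_of_nonneg_right (by positivity)
  -- `(u q)' = q ^ 2 + W u ^ 2`
  have hparts : ∫ t in a..X, (u t ^ 2 + q t ^ 2) =
      u X * q X - u a * q a + ∫ t in a..X, (1 - W t) * u t ^ 2 := by
    have hftc := intervalIntegral.integral_eq_sub_of_hasDerivAt (a := a) (b := X)
      (fun t _ => (hu t).mul (hq t)) (Continuous.intervalIntegrable (by fun_prop) _ _)
    simp only [Pi.mul_apply] at hftc
    rw [← hftc, ← intervalIntegral.integral_add (Continuous.intervalIntegrable (by fun_prop) _ _)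
      (Continuous.intervalIntegrable (by fun_prop) _ _)]
    congr 1; ext t; ring
  have hlower : δ * (X - a) ≤ ∫ t in a..X, (u t ^ 2 + q t ^ 2) := by
    have := intervalIntegral.integral_mono_on (μ := volume) haX intervalIntegrable_const
      (Continuous.intervalIntegrable (by fun_prop) _ _) fun t ht => hlow t ht.1
    simpa [mul_comm] using this
  have hrest : ∫ t in a..X, (1 - W t) * u t ^ 2 ≤ (1 + C) * I := by
    calc ∫ t in a..X, (1 - W t) * u t ^ 2 ≤ ∫ t in a..X, (1 + C) * u t ^ 2 :=
          intervalIntegral.integral_mono_on haX (Continuous.intervalIntegrable (by fun_prop) _ _)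
            (Continuous.intervalIntegrable (by fun_prop) _ _) fun t _ => by
              nlinarith [abs_le.mp (hW t), sq_nonneg (u t)]
      _ = (1 + C) * ∫ t in a..X, u t ^ 2 := intervalIntegral.integral_const_mul _ _
      _ ≤ (1 + C) * I := by
          gcongr
          rw [intervalIntegral.integral_of_le haX]
          exact setIntegral_le_integral hint (.of_forall fun t => sq_nonneg _)
  have hbdry : ∀ t, a ≤ t → |u t * q t| ≤ Δ / 2 := fun t ht => by
    rw [abs_le]; constructor <;> nlinarith [hup t ht, sq_nonneg (u t + q t), sq_nonneg (u t - q t)]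
  have hX : δ * (X - a) = Δ + (1 + C) * I + 1 := by
    simp only [X]; field_simp; ring
  linarith [abs_le.mp (hbdry X haX), abs_le.mp (hbdry a le_rfl)]

theorem abs_sq_sub_mul_sq_le {L : ℝ} (hL : 0 ≤ L) (a b : ℝ) :
    |b ^ 2 - L * a ^ 2| ≤ b ^ 2 + L * a ^ 2 :=
  abs_le.mpr ⟨by nlinarith [sq_nonneg b], by nlinarith [sq_nonneg a]⟩

theorem abs_two_mul_mul_le_sq_add_mul_sq {L : ℝ} (hL : 16 ≤ L) (a b : ℝ) :
    |2 * a * b| ≤ (b ^ 2 + L * a ^ 2) / 4 :=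
  abs_le.mpr ⟨by nlinarith [sq_nonneg a, sq_nonneg (b + 4 * a)],
    by nlinarith [sq_nonneg a, sq_nonneg (b - 4 * a)]⟩

theorem sq_le_sq_add_mul_sq {L : ℝ} (hL : 16 ≤ L) (a b : ℝ) :
    a ^ 2 ≤ (b ^ 2 + L * a ^ 2) / 16 := by
  nlinarith [sq_nonneg a, sq_nonneg b]

namespace VonNeumannWigner

noncomputable def weight (x : ℝ) : ℝ := (1 + zeta x ^ 2)⁻¹

noncomputable def amplitude (x : ℝ) : ℝ := 8 * zeta x * weight x

noncomputable def remainder (x : ℝ) : ℝ :=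
  32 * sin x ^ 4 * (3 * zeta x ^ 2 - 1) * weight x ^ 2

theorem hasDerivAt_zeta (x : ℝ) : HasDerivAt zeta (4 * sin x ^ 2) x := by
  have h := ((hasDerivAt_id x).const_mul 2).sub ((hasDerivAt_sin (2 * x)).comp x
    ((hasDerivAt_id x).const_mul 2))
  exact h.congr_deriv (by rw [cos_two_mul, sin_sq]; ring)

theorem weight_pos (x : ℝ) : 0 < weight x := by unfold weight; positivity

theorem weight_le_one (x : ℝ) : weight x ≤ 1 :=
  inv_le_one_of_one_le₀ (le_add_of_nonneg_right (sq_nonneg _))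

theorem zeta_sq_mul_weight (x : ℝ) : zeta x ^ 2 * weight x = 1 - weight x := by
  unfold weight; field_simp; ring

theorem hasDerivAt_amplitude (x : ℝ) :
    HasDerivAt amplitude (32 * sin x ^ 2 * weight x * (2 * weight x - 1)) x := by
  have h := ((hasDerivAt_zeta x).const_mul 8).fun_mul
    ((((hasDerivAt_zeta x).fun_pow 2).const_add 1).fun_inv (by positivity))
  refine h.congr_deriv ?_
  simp only [weight]
  field_simp
  ring

theorem abs_amplitude_le (x : ℝ) : |amplitude x| ≤ 4 := by
  have h2 : 2 * |zeta x| ≤ 1 + zeta x ^ 2 := by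
    nlinarith [sq_abs (zeta x), sq_nonneg (|zeta x| - 1)]
  rw [amplitude, abs_mul, abs_of_pos (weight_pos x), abs_mul, abs_of_pos (by norm_num : (0:ℝ) < 8),
    weight, mul_inv_le_iff₀ (by positivity)]
  linarith

theorem amplitude_sq_le (x : ℝ) : amplitude x ^ 2 ≤ 64 * weight x := by
  have h : amplitude x ^ 2 = 64 * (zeta x ^ 2 * weight x) * weight x := by rw [amplitude]; ring
  rw [h, zeta_sq_mul_weight]
  nlinarith [weight_pos x, weight_le_one x]

theorem abs_deriv_amplitude_le (x : ℝ) : |deriv amplitude x| ≤ 32 * weight x := by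
  have hw := weight_pos x
  have hw1 := weight_le_one x
  have hs : sin x ^ 2 ≤ 1 := sin_sq_le_one x
  rw [(hasDerivAt_amplitude x).deriv, abs_mul, abs_of_nonneg (by positivity)]
  calc 32 * sin x ^ 2 * weight x * |2 * weight x - 1| ≤ 32 * 1 * weight x * 1 := by
        gcongr; exact abs_le.mpr ⟨by linarith, by linarith⟩
    _ = 32 * weight x := by ring

theorem abs_remainder_le (x : ℝ) : |remainder x| ≤ 96 * weight x := by
  have hw := weight_pos x
  have hw1 := weight_le_one x
  have hs : sin x ^ 4 ≤ 1 := by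
    rw [show sin x ^ 4 = (sin x ^ 2) ^ 2 by ring]; exact pow_le_one₀ (by positivity) (sin_sq_le_one x)
  have h : remainder x = 32 * sin x ^ 4 * (3 - 4 * weight x) * weight x := by
    rw [remainder]; linear_combination (96 * sin x ^ 4 * weight x) * zeta_sq_mul_weight x
  rw [h, abs_mul, abs_mul, abs_of_nonneg (by positivity : 0 ≤ 32 * sin x ^ 4), abs_of_pos hw]
  calc 32 * sin x ^ 4 * |3 - 4 * weight x| * weight x ≤ 32 * 1 * 3 * weight x := by
        gcongr; exact abs_le.mpr ⟨by linarith, by linarith⟩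
    _ = 96 * weight x := by ring

theorem V_eq (x : ℝ) : V x = -2 * amplitude x * sin (2 * x) + remainder x := by
  have h : (1 : ℝ) + zeta x ^ 2 ≠ 0 := by positivity
  rw [V, remainder, amplitude, weight, sin_two_mul]
  field_simp
  ring

theorem abs_V_le (x : ℝ) : |V x| ≤ 2 * |amplitude x| + 96 * weight x := by
  rw [V_eq]
  calc |-2 * amplitude x * sin (2 * x) + remainder x|
      ≤ 2 * |amplitude x| * |sin (2 * x)| + |remainder x| := by
        refine (abs_add_le _ _).trans_eq ?_; simp [abs_mul]
    _ ≤ 2 * |amplitude x| * 1 + 96 * weight x := by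
        gcongr; exacts [abs_sin_le_one _, abs_remainder_le x]
    _ = _ := by ring

theorem abs_V_le_104 (x : ℝ) : |V x| ≤ 104 := by
  linarith [abs_V_le x, abs_amplitude_le x, weight_le_one x]

theorem continuous_V : Continuous V :=
  Continuous.div (by unfold zeta; fun_prop) (by unfold zeta; fun_prop) fun x => by positivity

theorem abs_amplitude_mul_V_le (x : ℝ) : |amplitude x * V x| ≤ 512 * weight x := by
  have h := sq_abs (amplitude x) ▸ amplitude_sq_le x
  rw [abs_mul]
  calc |amplitude x| * |V x| ≤ |amplitude x| * (2 * |amplitude x| + 96 * weight x) := by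
        gcongr; exact abs_V_le x
    _ ≤ 512 * weight x := by nlinarith [abs_amplitude_le x, weight_pos x]

/-- Along solutions, the derivative of the correction term cancels the non-integrable part
`-4 * amplitude x * sin (2 * x) * a * b` of the derivative of `b ^ 2 + L * a ^ 2`. -/
noncomputable def modEnergy (L x a b : ℝ) : ℝ :=
  b ^ 2 + L * a ^ 2 +
    amplitude x / (L - 1) * (cos (2 * x) * (2 * a * b) - sin (2 * x) * (b ^ 2 - L * a ^ 2))

theorem modEnergy_bounds {L : ℝ} (hL : 16 ≤ L) (x a b : ℝ) :
    2 / 3 * (b ^ 2 + L * a ^ 2) ≤ modEnergy L x a b ∧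
      modEnergy L x a b ≤ 4 / 3 * (b ^ 2 + L * a ^ 2) := by
  have hX := abs_sq_sub_mul_sq_le (by linarith : (0 : ℝ) ≤ L) a b
  have hY := abs_two_mul_mul_le_sq_add_mul_sq hL a b
  have hg : |amplitude x / (L - 1)| ≤ 4 / 15 := by
    rw [abs_div, abs_of_pos (by linarith : (0 : ℝ) < L - 1), div_le_iff₀ (by linarith)]
    nlinarith [abs_amplitude_le x]
  have hc : |cos (2 * x) * (2 * a * b) - sin (2 * x) * (b ^ 2 - L * a ^ 2)| ≤
      5 / 4 * (b ^ 2 + L * a ^ 2) := by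
    calc _ ≤ |cos (2 * x)| * |2 * a * b| + |sin (2 * x)| * |b ^ 2 - L * a ^ 2| := by
          refine (abs_sub _ _).trans_eq ?_; rw [abs_mul (cos _), abs_mul (sin _)]
      _ ≤ 1 * ((b ^ 2 + L * a ^ 2) / 4) + 1 * (b ^ 2 + L * a ^ 2) := by
          gcongr <;> first | exact abs_cos_le_one _ | exact abs_sin_le_one _
      _ = _ := by ring
  have h : |amplitude x / (L - 1) *
      (cos (2 * x) * (2 * a * b) - sin (2 * x) * (b ^ 2 - L * a ^ 2))| ≤
      4 / 15 * (5 / 4 * (b ^ 2 + L * a ^ 2)) := by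
    rw [abs_mul]; exact mul_le_mul hg hc (abs_nonneg _) (by norm_num)
  obtain ⟨h₁, h₂⟩ := abs_le.mp h
  constructor <;> unfold modEnergy <;> linarith

theorem hasDerivAt_modEnergy {L x : ℝ} {u q : ℝ → ℝ} (hL : L ≠ 1)
    (hu : HasDerivAt u (q x) x) (hq : HasDerivAt q ((V x - L) * u x) x) :
    HasDerivAt (fun t => modEnergy L t (u t) (q t))
      (-(deriv amplitude x * sin (2 * x)) / (L - 1) * (q x ^ 2 - L * u x ^ 2) +
        (remainder x +
          (deriv amplitude x * cos (2 * x) - amplitude x * sin (2 * x) * V x) / (L - 1)) *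
          (2 * u x * q x) +
        2 * amplitude x * cos (2 * x) * V x / (L - 1) * u x ^ 2) x := by
  have hg := (hasDerivAt_amplitude x).differentiableAt.hasDerivAt
  have h2 : HasDerivAt (fun t : ℝ => 2 * t) 2 x := by simpa using (hasDerivAt_id x).const_mul 2
  have hs := (hasDerivAt_sin (2 * x)).comp x h2
  have hc := (hasDerivAt_cos (2 * x)).comp x h2
  have hX := (hq.fun_pow 2).sub ((hu.fun_pow 2).const_mul L)
  have hY := (hu.const_mul 2).fun_mul hq
  have h := ((hq.fun_pow 2).add ((hu.fun_pow 2).const_mul L)).add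
    ((hg.div_const (L - 1)).fun_mul ((hc.fun_mul hY).sub (hs.fun_mul hX)))
  refine h.congr_deriv ?_
  have hL1 : L - 1 ≠ 0 := sub_ne_zero.mpr hL
  simp only [Function.comp_apply, Pi.sub_apply, V_eq]
  field_simp
  ring

theorem abs_deriv_modEnergy_le {L x : ℝ} {u q : ℝ → ℝ} (hL : 16 ≤ L)
    (hu : HasDerivAt u (q x) x) (hq : HasDerivAt q ((V x - L) * u x) x) :
    |deriv (fun t => modEnergy L t (u t) (q t)) x| ≤ 64 * weight x * modEnergy L x (u x) (q x) := by
  rw [(hasDerivAt_modEnergy (by linarith) hu hq).deriv]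
  have hL₁ : 0 < L - 1 := by linarith
  have hw := weight_pos x
  have hs := abs_sin_le_one (2 * x)
  have hc := abs_cos_le_one (2 * x)
  have hg' : |deriv amplitude x| ≤ 32 * weight x := abs_deriv_amplitude_le x
  have hgV : |amplitude x * V x| ≤ 512 * weight x := abs_amplitude_mul_V_le x
  set c₁ := -(deriv amplitude x * sin (2 * x)) / (L - 1)
  set c₂ := remainder x +
    (deriv amplitude x * cos (2 * x) - amplitude x * sin (2 * x) * V x) / (L - 1)
  set c₃ := 2 * amplitude x * cos (2 * x) * V x / (L - 1)
  have e₁ : |c₁| ≤ 3 * weight x := by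
    rw [abs_div, abs_neg, abs_mul, abs_of_pos hL₁, div_le_iff₀ hL₁]
    nlinarith [mul_le_mul hg' hs (abs_nonneg _) (by positivity)]
  have e₂ : |c₂| ≤ 133 * weight x := by
    have h : |deriv amplitude x * cos (2 * x) - amplitude x * sin (2 * x) * V x| ≤
        544 * weight x := by
      rw [mul_right_comm]
      refine (abs_sub _ _).trans ?_
      rw [abs_mul, abs_mul (amplitude x * V x)]
      nlinarith [mul_le_mul hg' hc (abs_nonneg _) (by positivity),
        mul_le_mul hgV hs (abs_nonneg _) (by positivity)]
    refine (abs_add_le _ _).trans ?_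
    rw [abs_div, abs_of_pos hL₁]
    have h' : |deriv amplitude x * cos (2 * x) - amplitude x * sin (2 * x) * V x| / (L - 1) ≤
        37 * weight x := by
      rw [div_le_iff₀ hL₁]; nlinarith
    linarith [abs_remainder_le x]
  have e₃ : |c₃| ≤ 69 * weight x := by
    rw [abs_div, abs_of_pos hL₁, div_le_iff₀ hL₁,
      show 2 * amplitude x * cos (2 * x) * V x = 2 * (amplitude x * V x) * cos (2 * x) by ring,
      abs_mul, abs_mul, abs_two]
    nlinarith [mul_le_mul hgV hc (abs_nonneg _) (by positivity)]
  have hX := abs_sq_sub_mul_sq_le (by linarith : (0 : ℝ) ≤ L) (u x) (q x)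
  have hY := abs_two_mul_mul_le_sq_add_mul_sq hL (u x) (q x)
  have hu₂ := sq_le_sq_add_mul_sq hL (u x) (q x)
  have hM := (modEnergy_bounds hL x (u x) (q x)).1
  calc |c₁ * (q x ^ 2 - L * u x ^ 2) + c₂ * (2 * u x * q x) + c₃ * u x ^ 2|
      ≤ |c₁| * |q x ^ 2 - L * u x ^ 2| + |c₂| * |2 * u x * q x| + |c₃| * u x ^ 2 := by
        refine (abs_add_three _ _ _).trans_eq ?_
        rw [abs_mul c₁, abs_mul c₂, abs_mul c₃, abs_of_nonneg (sq_nonneg (u x))]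
    _ ≤ 3 * weight x * (q x ^ 2 + L * u x ^ 2) + 133 * weight x * ((q x ^ 2 + L * u x ^ 2) / 4)
        + 69 * weight x * ((q x ^ 2 + L * u x ^ 2) / 16) := by gcongr
    _ ≤ 64 * weight x * modEnergy L x (u x) (q x) := by nlinarith

theorem weight_le_inv_sq {x : ℝ} (hx : 1 ≤ x) : weight x ≤ (x ^ 2)⁻¹ := by
  have hζ : x ≤ zeta x := by rw [zeta]; linarith [sin_le_one (2 * x)]
  exact inv_anti₀ (by positivity) (by nlinarith)

theorem modEnergy_bounds_of_one_le {L : ℝ} {u q : ℝ → ℝ} (hL : 16 ≤ L)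
    (hu : ∀ t, HasDerivAt u (q t) t) (hq : ∀ t, HasDerivAt q ((V t - L) * u t) t) {x : ℝ}
    (hx : 1 ≤ x) :
    modEnergy L 1 (u 1) (q 1) * exp (-64) ≤ modEnergy L x (u x) (q x) ∧
      modEnergy L x (u x) (q x) ≤ modEnergy L 1 (u 1) (q 1) * exp 64 := by
  have hM : ∀ t, 0 ≤ modEnergy L t (u t) (q t) := fun t =>
    le_trans (by positivity) (modEnergy_bounds hL t (u t) (q t)).1
  -- `64 / t ^ 2` dominates the rate `64 * weight t` and has integral `64` over `[1, ∞)`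
  have hK : ∀ t ∈ Ici (1 : ℝ), HasDerivAt (fun s => -64 * s⁻¹) (64 * (t ^ 2)⁻¹) t := fun t ht =>
    ((hasDerivAt_inv (by linarith [mem_Ici.mp ht])).const_mul (-64)).congr_deriv (by ring)
  have hrate : ∀ t ∈ Ici (1 : ℝ), |deriv (fun s => modEnergy L s (u s) (q s)) t| ≤
      64 * (t ^ 2)⁻¹ * modEnergy L t (u t) (q t) := fun t ht =>
    (abs_deriv_modEnergy_le hL (hu t) (hq t)).trans
      (mul_le_mul_of_nonneg_right (by linarith [weight_le_inv_sq (mem_Ici.mp ht)]) (hM t))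
  obtain ⟨h₁, h₂⟩ := mul_exp_neg_le_and_le_mul_exp_of_abs_deriv_le
    (fun t _ => (hasDerivAt_modEnergy (by linarith) (hu t) (hq t)).differentiableAt) hK hrate hx
  have hx₀ : 0 < x := by linarith
  have hK₀ : 0 ≤ -64 * x⁻¹ - -64 * (1 : ℝ)⁻¹ := by
    have := inv_le_one_of_one_le₀ hx; linarith
  have hK₁ : -64 * x⁻¹ - -64 * (1 : ℝ)⁻¹ ≤ 64 := by
    have := inv_pos.mpr hx₀; linarith
  exact ⟨le_trans (mul_le_mul_of_nonneg_left (exp_le_exp.2 (by linarith)) (hM 1)) h₁,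
    h₂.trans (mul_le_mul_of_nonneg_left (exp_le_exp.2 hK₁) (hM 1))⟩

end VonNeumannWigner

open VonNeumannWigner

/-- The Klein–Gordon operator with scalar von Neumann–Wigner potential has no
eigenvalues E with E² > 16 + m²: the equation −u'' + (m² + V)u = E²u has no
nonzero C² square-integrable solution. -/
theorem no_KG_eigenvalues_above_threshold :
    ∀ m : ℝ, 0 ≤ m → ∀ E : ℝ, E ^ 2 > 16 + m ^ 2 →
      ¬ ∃ u : ℝ → ℝ, u ≠ 0 ∧ ContDiff ℝ 2 u ∧
        MeasureTheory.Integrable (fun x : ℝ => u x ^ 2) MeasureTheory.volume ∧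
        ∀ x : ℝ, -(deriv (deriv u)) x + (m ^ 2 + V x) * u x = E ^ 2 * u x := by
  rintro m - E hE ⟨u, hu₀, hu, hint, hode⟩
  set L := E ^ 2 - m ^ 2
  have hL : 16 ≤ L := by linarith
  have hu' : ∀ t, HasDerivAt u (deriv u t) t := fun t =>
    (hu.differentiable (by norm_num) t).hasDerivAt
  have hq' : ∀ t, HasDerivAt (deriv u) ((V t - L) * u t) t := fun t =>
    (((contDiff_succ_iff_deriv (n := 1)).mp hu).2.2.differentiable one_ne_zero t).hasDerivAt
      |>.congr_deriv (by linarith [hode t])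
  have hW : ∀ t, |V t - L| ≤ 104 + L := fun t => by
    have := abs_le.mp (abs_V_le_104 t); rw [abs_le]; constructor <;> linarith
  by_cases h₁ : u 1 ^ 2 + deriv u 1 ^ 2 = 0
  · obtain ⟨hu₁, hq₁⟩ := (add_eq_zero_iff_of_nonneg (sq_nonneg _) (sq_nonneg _)).mp h₁
    exact hu₀ (eq_zero_of_hasDerivAt_of_eq_zero hu' hq' hW (pow_eq_zero_iff two_ne_zero |>.mp hu₁)
      (pow_eq_zero_iff two_ne_zero |>.mp hq₁))
  set M₁ := modEnergy L 1 (u 1) (deriv u 1)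
  have hM₁ : 0 < M₁ := by
    have := lt_of_le_of_ne (by positivity) (Ne.symm h₁)
    nlinarith [(modEnergy_bounds hL 1 (u 1) (deriv u 1)).1]
  refine not_integrable_sq_of_energy_bounds hu' hq' (continuous_V.sub continuous_const) hW
    (a := 1) (δ := 3 / 4 * M₁ * exp (-64) / L) (Δ := 3 / 2 * M₁ * exp 64) (by positivity)
    (fun t ht => ?_) (fun t ht => ?_) hint
  all_goals
    obtain ⟨hMlow, hMup⟩ := modEnergy_bounds_of_one_le hL hu' hq' ht
    obtain ⟨hNlow, hNup⟩ := modEnergy_bounds hL t (u t) (deriv u t)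
  · rw [div_le_iff₀ (by linarith)]; nlinarith [sq_nonneg (u t), sq_nonneg (deriv u t)]
  · nlinarith [sq_nonneg (u t), sq_nonneg (deriv u t)]
end
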